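/- Suppose A ∈ ℂ^{D×N} has column blocks A^i, let B be the horizontal concatenation of the matrices (U^i Σ^i) obtained from rank-d truncated SVDs of the blocks (so the i-th block of B equals (A^i)_d V^i for unitary V^i extending the right singular vectors), let Ψ ∈ ℂ^{D×N} be arbitrary, and set B' = B + Ψ. Then there exists a unitary matrix W of size N×N such that ‖ (B')_d V' − A W ‖_F ≤ 3√2 ‖(A)_d − A‖_F + (1+√2) ‖Ψ‖_F, where (B')_d V' denotes (B')_d right-multiplied by (the conjugate transpose of) a matrix of right singular vectors of (B')_d. -/

import Mathlib

/-
If each block of `B` is `(A^i)_d V^i`, then `B = Â V` with `Â` the concatenation of the blockwise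
truncations and `V = diag(V^i)` unitary. The blockwise truncation beats the restriction of any
global rank-`d` matrix to each block, so `‖Â - A‖_F ≤ ‖(A)_d - A‖_F =: a`. Comparing `(B')_d` with
the rank-`d` competitor `(A)_d V` gives `‖(B')_d - B'‖_F ≤ 2a + ‖Ψ‖_F`, and the triangle inequality
yields `‖(B')_d V' - A V V'‖_F = ‖(B')_d - A V‖_F ≤ 3a + 2‖Ψ‖_F`, which is within the stated bound.
-/

open Matrix

/-- Frobenius norm of a complex matrix. -/
noncomputable def frob {m n : Type*} [Fintype m] [Fintype n] (M : Matrix m n ℂ) : ℝ :=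
  Real.sqrt (∑ i, ∑ j, ‖M i j‖ ^ 2)

/-- `B` is a best rank-`d` approximation of `A` in Frobenius norm. -/
def IsBestRankApprox {m n : Type*} [Fintype m] [Fintype n] (d : ℕ)
    (A B : Matrix m n ℂ) : Prop :=
  B.rank ≤ d ∧ ∀ C : Matrix m n ℂ, C.rank ≤ d → frob (B - A) ≤ frob (C - A)

/-- The singular values of `M` : nonnegative square roots of the eigenvalues of `M * Mᴴ`
(unsorted enumeration). -/
noncomputable def singVals {D : ℕ} {n : Type*} [Fintype n] (M : Matrix (Fin D) n ℂ) :
    Fin D → ℝ :=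
  fun i => Real.sqrt ((Matrix.isHermitian_mul_conjTranspose_self M).eigenvalues i)

/-- `C` is a scaled left-singular-vector form of `M`, i.e. `C = U Σ = M V` for some
SVD `M = U Σ Vᴴ` of `M`: equivalently `C = M V` with `V` unitary and `Cᴴ C` diagonal with
nonnegative real entries. -/
def IsScaledLeftSV {D : ℕ} {n : Type*} [Fintype n] [DecidableEq n]
    (M C : Matrix (Fin D) n ℂ) : Prop :=
  ∃ V ∈ Matrix.unitaryGroup n ℂ, C = M * V ∧
    ∃ t : n → ℝ, (∀ j, 0 ≤ t j) ∧ Cᴴ * C = Matrix.diagonal (fun j => (t j : ℂ))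

section Frobenius

attribute [local instance] frobeniusNormedAddCommGroup

variable {m n : Type*} [Fintype m] [Fintype n]

lemma frob_eq_norm (M : Matrix m n ℂ) : frob M = ‖M‖ := by
  simp only [frob, frobenius_norm_def, Real.sqrt_eq_rpow, Real.rpow_two]

lemma frob_nonneg (M : Matrix m n ℂ) : 0 ≤ frob M := Real.sqrt_nonneg _

lemma frob_add_le (X Y : Matrix m n ℂ) : frob (X + Y) ≤ frob X + frob Y := by
  simp only [frob_eq_norm]
  exact norm_add_le X Y

lemma frob_sub_le (X Y : Matrix m n ℂ) : frob (X - Y) ≤ frob X + frob Y := by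
  simp only [frob_eq_norm]
  exact norm_sub_le X Y

lemma frob_sub_comm (X Y : Matrix m n ℂ) : frob (X - Y) = frob (Y - X) := by
  simp only [frob_eq_norm]
  exact norm_sub_rev X Y

lemma frob_sq (M : Matrix m n ℂ) : frob M ^ 2 = ∑ i, ∑ j, ‖M i j‖ ^ 2 :=
  Real.sq_sqrt (by positivity)

lemma frob_sq_eq_re_trace (M : Matrix m n ℂ) : frob M ^ 2 = (Mᴴ * M).trace.re := by
  rw [frob_sq, Finset.sum_comm]
  simp only [trace, diag, mul_apply, conjTranspose_apply, Complex.re_sum, Complex.star_def,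
    Complex.conj_mul']
  norm_cast

lemma frob_mul_unitary [DecidableEq n] (M : Matrix m n ℂ) {V : Matrix n n ℂ}
    (hV : V ∈ unitaryGroup n ℂ) : frob (M * V) = frob M := by
  have hVV : V * Vᴴ = 1 := mem_unitaryGroup_iff.mp hV
  have h : ((M * V)ᴴ * (M * V)).trace = (Mᴴ * M).trace := by
    rw [conjTranspose_mul, Matrix.mul_assoc, trace_mul_comm, Matrix.mul_assoc,
      Matrix.mul_assoc, hVV, Matrix.mul_one]
  rw [← sq_eq_sq₀ (frob_nonneg _) (frob_nonneg _), frob_sq_eq_re_trace,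
    frob_sq_eq_re_trace, h]

theorem IsBestRankApprox.frob_sub_mul_unitary_le [DecidableEq n] {d : ℕ}
    {A A₀ Ad Ψ Bd : Matrix m n ℂ} {V : Matrix n n ℂ} (hV : V ∈ unitaryGroup n ℂ)
    (hBd : IsBestRankApprox d (A₀ * V + Ψ) Bd) (hAd : Ad.rank ≤ d)
    (hA₀ : frob (A₀ - A) ≤ frob (Ad - A)) :
    frob (Bd - A * V) ≤ 3 * frob (Ad - A) + 2 * frob Ψ := by
  have hcompetitor : frob (Bd - (A₀ * V + Ψ)) ≤ 2 * frob (Ad - A) + frob Ψ :=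
    calc frob (Bd - (A₀ * V + Ψ))
        ≤ frob (Ad * V - (A₀ * V + Ψ)) := hBd.2 _ ((rank_mul_le_left _ _).trans hAd)
      _ = frob (((Ad - A) + (A - A₀)) * V - Ψ) := by
          congr 1; simp only [Matrix.add_mul, Matrix.sub_mul]; abel
      _ ≤ frob (Ad - A) + frob (A - A₀) + frob Ψ := by
        grw [frob_sub_le, frob_mul_unitary _ hV, frob_add_le]
      _ ≤ 2 * frob (Ad - A) + frob Ψ := by rw [frob_sub_comm A]; linarith
  calc frob (Bd - A * V)
      = frob ((Bd - (A₀ * V + Ψ)) + Ψ + (A₀ - A) * V) := by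
        congr 1; rw [Matrix.sub_mul]; abel
    _ ≤ frob (Bd - (A₀ * V + Ψ)) + frob Ψ + frob (A₀ - A) := by
      grw [frob_add_le, frob_add_le, frob_mul_unitary _ hV]
    _ ≤ 3 * frob (Ad - A) + 2 * frob Ψ := by linarith

end Frobenius

section Blocks

variable {m ι α : Type*} {n : ι → Type*}

def sigmaCols (X : ∀ i, Matrix m (n i) α) : Matrix m ((i : ι) × n i) α :=
  of fun r p => X p.1 r p.2

lemma sigmaCols_mul_blockDiagonal' [NonUnitalNonAssocSemiring α] [DecidableEq ι]
    [Fintype ι] [∀ i, Fintype (n i)] (X : ∀ i, Matrix m (n i) α) (V : ∀ i, Matrix (n i) (n i) α) :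
    sigmaCols X * blockDiagonal' V = sigmaCols fun i => X i * V i := by
  ext r ⟨i, c⟩
  rw [mul_apply, Fintype.sum_sigma, Finset.sum_eq_single i]
  · simp [sigmaCols, mul_apply, blockDiagonal'_apply]
  · intro j _ hji
    exact Finset.sum_eq_zero fun c' _ => by rw [blockDiagonal'_apply_ne _ _ _ hji, mul_zero]
  · simp

lemma blockDiagonal'_mem_unitaryGroup [CommRing α] [StarRing α] [DecidableEq ι] [Fintype ι]
    [∀ i, Fintype (n i)] [∀ i, DecidableEq (n i)] {V : ∀ i, Matrix (n i) (n i) α}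
    (hV : ∀ i, V i ∈ unitaryGroup (n i) α) :
    blockDiagonal' V ∈ unitaryGroup ((i : ι) × n i) α := by
  rw [mem_unitaryGroup_iff, star_eq_conjTranspose, blockDiagonal'_conjTranspose,
    ← blockDiagonal'_mul]
  convert blockDiagonal'_one with i
  exact mem_unitaryGroup_iff.mp (hV i)

variable [Fintype m] [Fintype ι] [∀ i, Fintype (n i)]

lemma frob_sq_eq_sum_blocks (X : Matrix m ((i : ι) × n i) ℂ) :
    frob X ^ 2 = ∑ i, frob (X.submatrix id (Sigma.mk i)) ^ 2 := by
  simp only [frob_sq, submatrix_apply, id]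
  rw [Finset.sum_comm, Fintype.sum_sigma]
  exact Finset.sum_congr rfl fun i _ => Finset.sum_comm

lemma frob_sigmaCols_sub_le {d : ℕ} {A : Matrix m ((i : ι) × n i) ℂ}
    {X : ∀ i, Matrix m (n i) ℂ} (hX : ∀ i, IsBestRankApprox d (A.submatrix id (Sigma.mk i)) (X i))
    {Y : Matrix m ((i : ι) × n i) ℂ} (hY : Y.rank ≤ d) :
    frob (sigmaCols X - A) ≤ frob (Y - A) := by
  rw [← sq_le_sq₀ (frob_nonneg _) (frob_nonneg _), frob_sq_eq_sum_blocks,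
    frob_sq_eq_sum_blocks]
  refine Finset.sum_le_sum fun i _ => pow_le_pow_left₀ (frob_nonneg _) ?_ 2
  exact (hX i).2 (Y.submatrix id (Sigma.mk i)) ((rank_submatrix_le _ _ _).trans hY)

end Blocks

theorem stmt8_general {D M : ℕ} {N : Fin M → ℕ} (d : ℕ)
    (A B Ψ : Matrix (Fin D) ((i : Fin M) × Fin (N i)) ℂ)
    (hB : ∀ i, ∃ Adi : Matrix (Fin D) (Fin (N i)) ℂ,
            IsBestRankApprox d (Matrix.of fun r c => A r ⟨i, c⟩) Adi ∧
            IsScaledLeftSV Adi (Matrix.of fun r c => B r ⟨i, c⟩))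
    (B' : Matrix (Fin D) ((i : Fin M) × Fin (N i)) ℂ) (hB' : B' = B + Ψ)
    (Bd : Matrix (Fin D) ((i : Fin M) × Fin (N i)) ℂ) (hBd : IsBestRankApprox d B' Bd)
    (C : Matrix (Fin D) ((i : Fin M) × Fin (N i)) ℂ) (hC : IsScaledLeftSV Bd C)
    (Ad : Matrix (Fin D) ((i : Fin M) × Fin (N i)) ℂ) (hAd : IsBestRankApprox d A Ad) :
    ∃ W ∈ Matrix.unitaryGroup ((i : Fin M) × Fin (N i)) ℂ,
      frob (C - A * W) ≤
        3 * Real.sqrt 2 * frob (Ad - A) + (1 + Real.sqrt 2) * frob Ψ := by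
  choose Adi hAdi hAdiSV using hB
  choose V hV hBV using hAdiSV
  obtain ⟨U, hU, rfl, -⟩ := hC
  have hVunitary := blockDiagonal'_mem_unitaryGroup hV
  have hBfactor : B = sigmaCols Adi * blockDiagonal' V := by
    rw [sigmaCols_mul_blockDiagonal']
    ext r ⟨i, c⟩
    exact congr_fun (congr_fun (hBV i).1 r) c
  subst hB' hBfactor
  refine ⟨blockDiagonal' V * U, mul_mem hVunitary hU, ?_⟩
  rw [← Matrix.mul_assoc, ← Matrix.sub_mul, frob_mul_unitary _ hU]
  have hbound := hBd.frob_sub_mul_unitary_le hVunitary hAd.1 (frob_sigmaCols_sub_le hAdi hAd.1)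
  nlinarith [Real.one_lt_sqrt_two, frob_nonneg (Ad - A), frob_nonneg Ψ]

/-- Stability of the one-level merge: if each block of `B` is a scaled left-singular-vector form
of a best rank-`d` approximation of the corresponding block of `A`, `B' = B + Ψ`, and `C` is a
scaled left-singular-vector form of a best rank-`d` approximation of `B'`, then there is a
unitary `W` with `‖C − A W‖_F ≤ 3√2 ‖(A)_d − A‖_F + (1+√2) ‖Ψ‖_F`. -/
theorem stmt8 {D M : ℕ} {N : Fin M → ℕ} (d : ℕ) (hd1 : 1 ≤ d) (hdD : d ≤ D)
    (A B Ψ : Matrix (Fin D) ((i : Fin M) × Fin (N i)) ℂ)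
    (hB : ∀ i, ∃ Adi : Matrix (Fin D) (Fin (N i)) ℂ,
            IsBestRankApprox d (Matrix.of fun r c => A r ⟨i, c⟩) Adi ∧
            IsScaledLeftSV Adi (Matrix.of fun r c => B r ⟨i, c⟩))
    (B' : Matrix (Fin D) ((i : Fin M) × Fin (N i)) ℂ) (hB' : B' = B + Ψ)
    (Bd : Matrix (Fin D) ((i : Fin M) × Fin (N i)) ℂ) (hBd : IsBestRankApprox d B' Bd)
    (C : Matrix (Fin D) ((i : Fin M) × Fin (N i)) ℂ) (hC : IsScaledLeftSV Bd C)
    (Ad : Matrix (Fin D) ((i : Fin M) × Fin (N i)) ℂ) (hAd : IsBestRankApprox d A Ad) :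
    ∃ W ∈ Matrix.unitaryGroup ((i : Fin M) × Fin (N i)) ℂ,
      frob (C - A * W) ≤
        3 * Real.sqrt 2 * frob (Ad - A) + (1 + Real.sqrt 2) * frob Ψ :=
  stmt8_general d A B Ψ hB B' hB' Bd hBd C hC Ad hAd
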